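/- arXiv:2211.13840 — 2 statements merged into one kernel-verified Lean document; each statement's English description precedes it below -/
import Mathlib

section
/- Let T be linear, 1 ≤ r ≤ s₀, s₁ ≤ ∞, and suppose the grand maximal truncation operators satisfy M_{T,s₀} : L^r → L^{p₀,∞} with norm C₀ and M_{T,s₁} : L^r → L^{p₁,∞} with norm C₁. Then for θ ∈ (0,1), with 1/s = (1−θ)/s₀ + θ/s₁ and 1/p = (1−θ)/p₀ + θ/p₁, one has the pointwise bound M_{T,s} f(x) ≤ (M_{T,s₀} f(x))^{1−θ} (M_{T,s₁} f(x))^θ, and consequently ‖M_{T,s}‖_{L^r → L^{p,∞}} ≲ C₀^{1−θ} C₁^θ. -/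
open MeasureTheory Set
open scoped ENNReal NNReal

noncomputable section

/-- An axis-parallel cube: center `c` and half side length `r > 0`. -/
structure Cube (n : ℕ) where
  c : Fin n → ℝ
  r : ℝ
  hr : 0 < r

namespace Cube
variable {n : ℕ}
def set (Q : Cube n) : Set (Fin n → ℝ) := {x | ∀ i, |x i - Q.c i| ≤ Q.r}
/-- The concentric dilate `3Q`. -/
def three (Q : Cube n) : Cube n := ⟨Q.c, 3 * Q.r, by have := Q.hr; linarith⟩
end Cube

/-- The grand maximal truncation operator
`M_{T,s} f(x) = sup_{Q ∋ x} |Q|^{-1/s} ‖T(f 1_{(3Q)ᶜ})‖_{L^s(Q)}`. -/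
def MT {n : ℕ} (T : ((Fin n → ℝ) → ℝ) →ₗ[ℝ] ((Fin n → ℝ) → ℝ)) (s : ℝ)
    (f : (Fin n → ℝ) → ℝ) (x : Fin n → ℝ) : ℝ≥0∞ :=
  ⨆ (Q : Cube n) (_ : x ∈ Q.set),
    volume Q.set ^ (-(1 / s)) *
      (∫⁻ y in Q.set, (‖T ((Q.three.set)ᶜ.indicator f) y‖₊ : ℝ≥0∞) ^ s) ^ (1 / s)

/-!
On a fixed cube `Q` the function `T (f 1_{(3Q)ᶜ})` does not depend on the exponent, so the
pointwise bound is the log-convexity of `s ↦ ‖g‖_{L^s(Q, dx/|Q|)}` (Hölder's inequality), followed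
by a supremum over the cubes containing `x`. For the weak-type bound, `M_{T,s} f ≤ G₀^{1-θ} G₁^θ`
gives `{M_{T,s} f > λ} ⊆ {G₀ > a} ∪ {G₁ > b}` whenever `a^{1-θ} b^θ = λ`; choosing `a` and `b` so
that both weak-type estimates bound the two sets by the same measure gives the constant `2^{1/p}`.
-/

theorem interpolation_exponent_pos {s₀ s₁ θ s : ℝ} (hs₀ : 0 < s₀) (hs₁ : 0 < s₁)
    (hθ : θ ∈ Icc (0 : ℝ) 1) (hs : 1 / s = (1 - θ) / s₀ + θ / s₁) : 0 < s := by
  refine one_div_pos.mp (hs ▸ ?_)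
  rcases hθ.1.eq_or_lt with rfl | hθ₀
  · simpa using hs₀
  · exact add_pos_of_nonneg_of_pos (div_nonneg (sub_nonneg.mpr hθ.2) hs₀.le) (div_pos hθ₀ hs₁)

/-- Lyapunov's inequality, from Hölder with the weights `(1 - θ) s / s₀` and `θ s / s₁`. -/
theorem lintegral_rpow_one_div_le_interpolate {α : Type*} [MeasurableSpace α] {μ : Measure α}
    {g : α → ℝ≥0∞} (hg : AEMeasurable g μ) {s₀ s₁ θ s : ℝ} (hs₀ : 0 < s₀) (hs₁ : 0 < s₁)
    (hθ : θ ∈ Icc (0 : ℝ) 1) (hs : 1 / s = (1 - θ) / s₀ + θ / s₁) :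
    (∫⁻ a, g a ^ s ∂μ) ^ (1 / s) ≤
      ((∫⁻ a, g a ^ s₀ ∂μ) ^ (1 / s₀)) ^ (1 - θ) * ((∫⁻ a, g a ^ s₁ ∂μ) ^ (1 / s₁)) ^ θ := by
  have hs_pos := interpolation_exponent_pos hs₀ hs₁ hθ hs
  have hw₀ : 0 ≤ (1 - θ) * s / s₀ := div_nonneg (mul_nonneg (sub_nonneg.mpr hθ.2) hs_pos.le) hs₀.le
  have hw₁ : 0 ≤ θ * s / s₁ := div_nonneg (mul_nonneg hθ.1 hs_pos.le) hs₁.le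
  have hweights : (1 - θ) * s / s₀ + θ * s / s₁ = 1 := by
    rw [mul_div_right_comm, mul_div_right_comm θ, ← add_mul, ← hs, one_div_mul_cancel hs_pos.ne']
  have hsplit : ∀ a, g a ^ s = (g a ^ s₀) ^ ((1 - θ) * s / s₀) * (g a ^ s₁) ^ (θ * s / s₁) :=
    fun a => by
      rw [← ENNReal.rpow_mul, ← ENNReal.rpow_mul,
        ← ENNReal.rpow_add_of_nonneg _ _ (by positivity) (by positivity)]
      congr 1
      field_simp
      ring
  calc (∫⁻ a, g a ^ s ∂μ) ^ (1 / s)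
      ≤ ((∫⁻ a, g a ^ s₀ ∂μ) ^ ((1 - θ) * s / s₀) * (∫⁻ a, g a ^ s₁ ∂μ) ^ (θ * s / s₁))
          ^ (1 / s) := by
        gcongr
        simp_rw [hsplit]
        exact ENNReal.lintegral_mul_norm_pow_le (hg.pow_const _) (hg.pow_const _) hw₀ hw₁ hweights
    _ = _ := by
        rw [ENNReal.mul_rpow_of_nonneg _ _ (by positivity), ← ENNReal.rpow_mul, ← ENNReal.rpow_mul,
          ← ENNReal.rpow_mul, ← ENNReal.rpow_mul]
        congr 2 <;> field_simp

def Cube.avgMeasure {n : ℕ} (Q : Cube n) : Measure (Fin n → ℝ) :=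
  (volume Q.set)⁻¹ • volume.restrict Q.set

def truncAvg {n : ℕ} (T : ((Fin n → ℝ) → ℝ) →ₗ[ℝ] ((Fin n → ℝ) → ℝ)) (s : ℝ)
    (f : (Fin n → ℝ) → ℝ) (Q : Cube n) : ℝ≥0∞ :=
  volume Q.set ^ (-(1 / s)) *
    (∫⁻ y in Q.set, (‖T ((Q.three.set)ᶜ.indicator f) y‖₊ : ℝ≥0∞) ^ s) ^ (1 / s)

section MaximalTruncation

variable {n : ℕ} (T : ((Fin n → ℝ) → ℝ) →ₗ[ℝ] ((Fin n → ℝ) → ℝ)) (f : (Fin n → ℝ) → ℝ)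

theorem MT_eq_iSup_truncAvg (s : ℝ) (x : Fin n → ℝ) :
    MT T s f x = ⨆ (Q : Cube n) (_ : x ∈ Q.set), truncAvg T s f Q := rfl

theorem truncAvg_eq_lintegral_avgMeasure {s : ℝ} (hs : 0 ≤ s) (Q : Cube n) :
    truncAvg T s f Q =
      (∫⁻ y, (‖T ((Q.three.set)ᶜ.indicator f) y‖₊ : ℝ≥0∞) ^ s ∂Q.avgMeasure) ^ (1 / s) := by
  rw [truncAvg, Cube.avgMeasure, lintegral_smul_measure, smul_eq_mul,
    ENNReal.mul_rpow_of_nonneg _ _ (by positivity), ENNReal.inv_rpow, ENNReal.rpow_neg]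

variable {T}

theorem truncAvg_le_interpolate (hTmeas : ∀ g, Measurable (T g)) {s₀ s₁ θ s : ℝ}
    (hs₀ : 0 < s₀) (hs₁ : 0 < s₁) (hθ : θ ∈ Icc (0 : ℝ) 1)
    (hs : 1 / s = (1 - θ) / s₀ + θ / s₁) (Q : Cube n) :
    truncAvg T s f Q ≤ truncAvg T s₀ f Q ^ (1 - θ) * truncAvg T s₁ f Q ^ θ := by
  have hs_pos := interpolation_exponent_pos hs₀ hs₁ hθ hs
  rw [truncAvg_eq_lintegral_avgMeasure T f hs_pos.le, truncAvg_eq_lintegral_avgMeasure T f hs₀.le,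
    truncAvg_eq_lintegral_avgMeasure T f hs₁.le]
  exact lintegral_rpow_one_div_le_interpolate
    (hTmeas _).nnnorm.coe_nnreal_ennreal.aemeasurable hs₀ hs₁ hθ hs

theorem MT_le_rpow_mul_rpow (hTmeas : ∀ g, Measurable (T g)) {s₀ s₁ θ s : ℝ}
    (hs₀ : 0 < s₀) (hs₁ : 0 < s₁) (hθ : θ ∈ Icc (0 : ℝ) 1)
    (hs : 1 / s = (1 - θ) / s₀ + θ / s₁) (x : Fin n → ℝ) :
    MT T s f x ≤ MT T s₀ f x ^ (1 - θ) * MT T s₁ f x ^ θ := by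
  simp only [MT_eq_iSup_truncAvg]
  refine iSup₂_le fun Q hQ => (truncAvg_le_interpolate f hTmeas hs₀ hs₁ hθ hs Q).trans ?_
  have hθ₀ : 0 ≤ θ := hθ.1
  have hθ₁ : 0 ≤ 1 - θ := sub_nonneg.mpr hθ.2
  gcongr
  · exact le_iSup₂ (f := fun (Q : Cube n) (_ : x ∈ Q.set) => truncAvg T s₀ f Q) Q hQ
  · exact le_iSup₂ (f := fun (Q : Cube n) (_ : x ∈ Q.set) => truncAvg T s₁ f Q) Q hQ

end MaximalTruncation

theorem setOf_lt_subset_union_of_le_rpow_mul_rpow {α : Type*} {F G₀ G₁ : α → ℝ≥0∞} {θ : ℝ}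
    (hθ : θ ∈ Icc (0 : ℝ) 1) (hF : ∀ x, F x ≤ G₀ x ^ (1 - θ) * G₁ x ^ θ) {lam a b : ℝ≥0∞}
    (hab : a ^ (1 - θ) * b ^ θ = lam) :
    {x | lam < F x} ⊆ {x | a < G₀ x} ∪ {x | b < G₁ x} := by
  intro x hx
  by_contra hout
  simp only [mem_union, mem_ofPred_eq, not_or, not_lt] at hout
  have hθ₀ : 0 ≤ θ := hθ.1
  have hθ₁ : 0 ≤ 1 - θ := sub_nonneg.mpr hθ.2
  refine (not_le.mpr hx) ((hF x).trans (hab ▸ ?_))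
  gcongr
  exacts [hout.1, hout.2]

namespace NNReal

theorem rpow_mul_rpow_of_levels {θ p p₀ p₁ : ℝ} (hp : 1 / p = (1 - θ) / p₀ + θ / p₁) (hp_ne : p ≠ 0)
    (a₀ a₁ : ℝ≥0) {u : ℝ≥0} (hu : u ≠ 0) :
    (a₀ * u ^ (-(p / p₀))) ^ (1 - θ) * (a₁ * u ^ (-(p / p₁))) ^ θ = a₀ ^ (1 - θ) * a₁ ^ θ / u := by
  rw [mul_rpow, mul_rpow, ← rpow_mul, ← rpow_mul, mul_mul_mul_comm, ← rpow_add hu,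
    show -(p / p₀) * (1 - θ) + -(p / p₁) * θ = -1 by
      rw [show -(p / p₀) * (1 - θ) + -(p / p₁) * θ = -(p * ((1 - θ) / p₀ + θ / p₁)) by ring,
        ← hp, mul_one_div_cancel hp_ne],
    rpow_neg_one, div_eq_mul_inv]

theorem div_mul_rpow_neg_rpow {a : ℝ≥0} (ha : a ≠ 0) (u : ℝ≥0) {x q : ℝ} (hq : q ≠ 0) :
    (a / (a * u ^ (-(x / q)))) ^ q = u ^ x := by
  rw [div_mul_cancel_left₀ ha, ← rpow_neg, neg_neg, ← rpow_mul, div_mul_cancel₀ _ hq]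

end NNReal

theorem ENNReal.mul_rpow_one_sub_mul_mul_rpow (a b c : ℝ≥0∞) {θ : ℝ} (hθ : θ ∈ Icc (0 : ℝ) 1) :
    (a * c) ^ (1 - θ) * (b * c) ^ θ = a ^ (1 - θ) * b ^ θ * c := by
  have hθ₁ : 0 ≤ 1 - θ := sub_nonneg.mpr hθ.2
  rw [ENNReal.mul_rpow_of_nonneg _ _ hθ₁, ENNReal.mul_rpow_of_nonneg _ _ hθ.1,
    mul_mul_mul_comm, ← ENNReal.rpow_add_of_nonneg _ _ hθ₁ hθ.1, sub_add_cancel, ENNReal.rpow_one]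

section WeakType

variable {α : Type*} [MeasurableSpace α] {μ : Measure α}

/-- `‖G‖_{L^{q,∞}(μ)} ≤ A`. -/
def WeakTypeBound (μ : Measure α) (G : α → ℝ≥0∞) (q : ℝ) (A : ℝ≥0∞) : Prop :=
  ∀ lam : ℝ≥0, 0 < lam → (lam : ℝ≥0∞) * μ {x | (lam : ℝ≥0∞) < G x} ^ (1 / q) ≤ A

namespace WeakTypeBound

variable {F G G₀ G₁ : α → ℝ≥0∞} {q : ℝ} {A : ℝ≥0∞}

theorem measure_lt_le (h : WeakTypeBound μ G q A) (hq : 0 < q) {a : ℝ≥0} (ha : 0 < a) :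
    μ {x | (a : ℝ≥0∞) < G x} ≤ (A / a) ^ q := by
  have hroot : μ {x | (a : ℝ≥0∞) < G x} ^ (1 / q) ≤ A / a :=
    (ENNReal.le_div_iff_mul_le (Or.inl (by exact_mod_cast ha.ne')) (Or.inl ENNReal.coe_ne_top)).mpr
      (by rw [mul_comm]; exact h a ha)
  calc μ {x | (a : ℝ≥0∞) < G x} = (μ {x | (a : ℝ≥0∞) < G x} ^ (1 / q)) ^ q := by
        rw [← ENNReal.rpow_mul, one_div_mul_cancel hq.ne', ENNReal.rpow_one]
    _ ≤ (A / a) ^ q := by gcongr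

theorem measure_pos_eq_zero (h : WeakTypeBound μ G q 0) (hq : 0 < q) :
    μ {x | 0 < G x} = 0 := by
  have hcover : {x | 0 < G x} ⊆ ⋃ k : ℕ, {x | (((k + 1 : ℝ≥0)⁻¹ : ℝ≥0) : ℝ≥0∞) < G x} := by
    intro x hx
    obtain ⟨k, hk⟩ := ENNReal.exists_inv_nat_lt (ne_of_gt hx)
    refine mem_iUnion.mpr ⟨k, lt_of_le_of_lt ?_ hk⟩
    rw [ENNReal.coe_inv (by positivity)]
    push_cast
    gcongr
    exact le_self_add
  refine measure_mono_null hcover (measure_iUnion_null fun k => ?_)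
  refine nonpos_iff_eq_zero.mp ((h.measure_lt_le hq (by positivity)).trans ?_)
  rw [ENNReal.zero_div, ENNReal.zero_rpow_of_pos hq]

theorem of_measure_pos_eq_zero (hG : μ {x | 0 < G x} = 0) (hFG : ∀ x, G x = 0 → F x = 0)
    (hq : 0 < q) : WeakTypeBound μ F q A := fun lam _ => by
  have hnull : μ {x | (lam : ℝ≥0∞) < F x} = 0 :=
    measure_mono_null (fun x (hx : (lam : ℝ≥0∞) < F x) =>
      show 0 < G x from pos_iff_ne_zero.mpr fun h0 => by simp [hFG x h0] at hx) hG
  rw [hnull, ENNReal.zero_rpow_of_pos (one_div_pos.mpr hq), mul_zero]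
  exact zero_le

variable {θ p p₀ p₁ : ℝ}

theorem of_le_rpow_mul_rpow_coe (hp₀ : 0 < p₀) (hp₁ : 0 < p₁) (hθ : θ ∈ Icc (0 : ℝ) 1)
    (hp : 1 / p = (1 - θ) / p₀ + θ / p₁) (hF : ∀ x, F x ≤ G₀ x ^ (1 - θ) * G₁ x ^ θ)
    {A₀ A₁ : ℝ≥0} (hA₀ : A₀ ≠ 0) (hA₁ : A₁ ≠ 0)
    (h₀ : WeakTypeBound μ G₀ p₀ A₀) (h₁ : WeakTypeBound μ G₁ p₁ A₁) :
    WeakTypeBound μ F p (2 ^ (1 / p) * ((A₀ ^ (1 - θ) * A₁ ^ θ : ℝ≥0) : ℝ≥0∞)) := by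
  intro lam hlam
  have hp_pos := interpolation_exponent_pos hp₀ hp₁ hθ hp
  have hθ₀ : 0 ≤ θ := hθ.1
  have hθ₁ : 0 ≤ 1 - θ := sub_nonneg.mpr hθ.2
  set A := A₀ ^ (1 - θ) * A₁ ^ θ
  have hA : A ≠ 0 := mul_ne_zero (by simp [NNReal.rpow_eq_zero_iff, hA₀])
    (by simp [NNReal.rpow_eq_zero_iff, hA₁])
  -- the two levels are balanced so that each superlevel set has measure at most `u ^ p`
  set u := A / lam
  have hu : u ≠ 0 := div_ne_zero hA hlam.ne'
  have hab : ((A₀ * u ^ (-(p / p₀)) : ℝ≥0) : ℝ≥0∞) ^ (1 - θ) *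
      ((A₁ * u ^ (-(p / p₁)) : ℝ≥0) : ℝ≥0∞) ^ θ = lam := by
    rw [← ENNReal.coe_rpow_of_nonneg _ hθ₁, ← ENNReal.coe_rpow_of_nonneg _ hθ₀, ← ENNReal.coe_mul,
      NNReal.rpow_mul_rpow_of_levels hp hp_pos.ne' A₀ A₁ hu, div_div_cancel₀ hA]
  have hlevel : ∀ {G : α → ℝ≥0∞} {q : ℝ} {B : ℝ≥0}, 0 < q → B ≠ 0 → WeakTypeBound μ G q B →
      μ {x | ((B * u ^ (-(p / q)) : ℝ≥0) : ℝ≥0∞) < G x} ≤ ((u ^ p : ℝ≥0) : ℝ≥0∞) :=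
    fun hq hB h => (h.measure_lt_le hq (by positivity)).trans_eq (by
      rw [← ENNReal.coe_div (by positivity), ← ENNReal.coe_rpow_of_nonneg _ hq.le,
        NNReal.div_mul_rpow_neg_rpow hB u hq.ne'])
  calc (lam : ℝ≥0∞) * μ {x | (lam : ℝ≥0∞) < F x} ^ (1 / p)
      ≤ lam * (((u ^ p : ℝ≥0) : ℝ≥0∞) + ((u ^ p : ℝ≥0) : ℝ≥0∞)) ^ (1 / p) := by
        gcongr
        exact (measure_mono (setOf_lt_subset_union_of_le_rpow_mul_rpow hθ hF hab)).trans
          ((measure_union_le _ _).trans (add_le_add (hlevel hp₀ hA₀ h₀) (hlevel hp₁ hA₁ h₁)))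
    _ = ((lam * (2 * u ^ p) ^ (1 / p) : ℝ≥0) : ℝ≥0∞) := by
        rw [← ENNReal.coe_add, ← two_mul, ← ENNReal.coe_rpow_of_nonneg _ (by positivity),
          ← ENNReal.coe_mul]
    _ = 2 ^ (1 / p) * A := by
        rw [NNReal.mul_rpow, ← NNReal.rpow_mul, mul_one_div_cancel hp_pos.ne', NNReal.rpow_one,
          mul_left_comm, mul_div_cancel₀ _ hlam.ne', ENNReal.coe_mul,
          ENNReal.coe_rpow_of_nonneg _ (by positivity), ENNReal.coe_ofNat]

theorem of_le_rpow_mul_rpow (hp₀ : 0 < p₀) (hp₁ : 0 < p₁) (hθ : θ ∈ Ioo (0 : ℝ) 1)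
    (hp : 1 / p = (1 - θ) / p₀ + θ / p₁) (hF : ∀ x, F x ≤ G₀ x ^ (1 - θ) * G₁ x ^ θ)
    {A₀ A₁ : ℝ≥0∞} (h₀ : WeakTypeBound μ G₀ p₀ A₀) (h₁ : WeakTypeBound μ G₁ p₁ A₁) :
    WeakTypeBound μ F p (2 ^ (1 / p) * A₀ ^ (1 - θ) * A₁ ^ θ) := by
  have hp_pos := interpolation_exponent_pos hp₀ hp₁ (Ioo_subset_Icc_self hθ) hp
  have hθ₀ : 0 < θ := hθ.1
  have hθ₁ : 0 < 1 - θ := sub_pos.mpr hθ.2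
  rcases eq_or_ne A₀ 0 with rfl | hA₀
  · refine of_measure_pos_eq_zero (h₀.measure_pos_eq_zero hp₀) (fun x hx => ?_) hp_pos
    simpa [hx, ENNReal.zero_rpow_of_pos hθ₁] using hF x
  rcases eq_or_ne A₁ 0 with rfl | hA₁
  · refine of_measure_pos_eq_zero (h₁.measure_pos_eq_zero hp₁) (fun x hx => ?_) hp_pos
    simpa [hx, ENNReal.zero_rpow_of_pos hθ₀] using hF x
  have h2 : (2 : ℝ≥0∞) ^ (1 / p) ≠ 0 :=
    (ENNReal.rpow_eq_zero_iff_of_pos (one_div_pos.mpr hp_pos)).not.mpr two_ne_zero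
  have hA₀θ : A₀ ^ (1 - θ) ≠ 0 := (ENNReal.rpow_eq_zero_iff_of_pos hθ₁).not.mpr hA₀
  have hA₁θ : A₁ ^ θ ≠ 0 := (ENNReal.rpow_eq_zero_iff_of_pos hθ₀).not.mpr hA₁
  rcases eq_or_ne A₀ ⊤ with rfl | hA₀'
  · intro lam _
    rw [ENNReal.top_rpow_of_pos hθ₁, ENNReal.mul_top h2, ENNReal.top_mul hA₁θ]
    exact le_top
  rcases eq_or_ne A₁ ⊤ with rfl | hA₁'
  · intro lam _
    rw [ENNReal.top_rpow_of_pos hθ₀, ENNReal.mul_top (mul_ne_zero h2 hA₀θ)]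
    exact le_top
  lift A₀ to ℝ≥0 using hA₀'
  lift A₁ to ℝ≥0 using hA₁'
  have h := of_le_rpow_mul_rpow_coe hp₀ hp₁ (Ioo_subset_Icc_self hθ) hp hF
    (by exact_mod_cast hA₀) (by exact_mod_cast hA₁) h₀ h₁
  rwa [ENNReal.coe_mul, ENNReal.coe_rpow_of_nonneg _ hθ₁.le, ENNReal.coe_rpow_of_nonneg _ hθ₀.le,
    ← mul_assoc] at h

end WeakTypeBound

end WeakType

/-- Interpolation of grand maximal truncation operators: if `M_{T,s₀} : L^r → L^{p₀,∞}`
with norm `C₀` and `M_{T,s₁} : L^r → L^{p₁,∞}` with norm `C₁`, then with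
`1/s = (1-θ)/s₀ + θ/s₁` and `1/p = (1-θ)/p₀ + θ/p₁` one has the pointwise bound
`M_{T,s} f ≤ (M_{T,s₀} f)^{1-θ} (M_{T,s₁} f)^θ` and hence
`‖M_{T,s}‖_{L^r → L^{p,∞}} ≲ C₀^{1-θ} C₁^θ`. -/
theorem stmt7 {n : ℕ} (T : ((Fin n → ℝ) → ℝ) →ₗ[ℝ] ((Fin n → ℝ) → ℝ))
    (hTmeas : ∀ g, Measurable (T g))
    (r s₀ s₁ p₀ p₁ θ s p : ℝ) (C₀ C₁ : ℝ≥0)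
    (hr : 1 ≤ r) (hs₀ : r ≤ s₀) (hs₁ : r ≤ s₁) (hp₀ : 0 < p₀) (hp₁ : 0 < p₁)
    (hθ : θ ∈ Set.Ioo (0 : ℝ) 1)
    (hs : 1 / s = (1 - θ) / s₀ + θ / s₁) (hp : 1 / p = (1 - θ) / p₀ + θ / p₁)
    (hM₀ : ∀ (f : (Fin n → ℝ) → ℝ), MemLp f (ENNReal.ofReal r) volume →
      ∀ lam : ℝ≥0, 0 < lam →
        (lam : ℝ≥0∞) * volume {x | (lam : ℝ≥0∞) < MT T s₀ f x} ^ (1 / p₀)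
          ≤ (C₀ : ℝ≥0∞) * eLpNorm f (ENNReal.ofReal r) volume)
    (hM₁ : ∀ (f : (Fin n → ℝ) → ℝ), MemLp f (ENNReal.ofReal r) volume →
      ∀ lam : ℝ≥0, 0 < lam →
        (lam : ℝ≥0∞) * volume {x | (lam : ℝ≥0∞) < MT T s₁ f x} ^ (1 / p₁)
          ≤ (C₁ : ℝ≥0∞) * eLpNorm f (ENNReal.ofReal r) volume) :
    (∀ (f : (Fin n → ℝ) → ℝ) (x : Fin n → ℝ),
      MT T s f x ≤ (MT T s₀ f x) ^ (1 - θ) * (MT T s₁ f x) ^ θ) ∧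
    ∃ K : ℝ≥0, 0 < K ∧
      ∀ (f : (Fin n → ℝ) → ℝ), MemLp f (ENNReal.ofReal r) volume →
        ∀ lam : ℝ≥0, 0 < lam →
          (lam : ℝ≥0∞) * volume {x | (lam : ℝ≥0∞) < MT T s f x} ^ (1 / p)
            ≤ (K : ℝ≥0∞) * (C₀ : ℝ≥0∞) ^ (1 - θ) * (C₁ : ℝ≥0∞) ^ θ
                * eLpNorm f (ENNReal.ofReal r) volume := by
  have hs₀_pos : 0 < s₀ := by linarith
  have hs₁_pos : 0 < s₁ := by linarith
  have hθ' : θ ∈ Icc (0 : ℝ) 1 := Ioo_subset_Icc_self hθ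
  have hpointwise : ∀ f x, MT T s f x ≤ MT T s₀ f x ^ (1 - θ) * MT T s₁ f x ^ θ :=
    fun f => MT_le_rpow_mul_rpow f hTmeas hs₀_pos hs₁_pos hθ' hs
  refine ⟨hpointwise, 2 ^ (1 / p), NNReal.rpow_pos two_pos, fun f hf lam hlam => ?_⟩
  have hweak := WeakTypeBound.of_le_rpow_mul_rpow hp₀ hp₁ hθ hp (hpointwise f) (hM₀ f hf) (hM₁ f hf)
  refine (hweak lam hlam).trans_eq ?_
  rw [mul_assoc, ENNReal.mul_rpow_one_sub_mul_mul_rpow _ _ _ hθ',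
    ENNReal.coe_rpow_of_nonneg _ (one_div_pos.mpr (interpolation_exponent_pos hp₀ hp₁ hθ' hp)).le,
    ENNReal.coe_ofNat, mul_assoc, mul_assoc, mul_assoc]
end
end

section
/- Let 1 ≤ r < ∞. There exist f ∈ L^∞_c, a measurable set K of positive measure, and for each cube Q a sparse family 𝒮(Q), such that sup_{Q ∋ x} ‖Λ_{𝒮(Q),r}(f 1_{(3Q)^c})‖_{L^∞(Q)} = ∞ for every x ∈ K. Concretely, one may take f = 1_{Q₀} for a fixed cube Q₀, 𝒮(Q) = {3^k Q : k ≥ 1}, and K = Q₀. -/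
open MeasureTheory Set
open scoped ENNReal NNReal

noncomputable section

/-- The `q`-average `⟨f⟩_{q,Q}` in `ℝ≥0∞`. -/
def avgE {n : ℕ} (q : ℝ) (Q : Cube n) (f : (Fin n → ℝ) → ℝ) : ℝ≥0∞ :=
  ((volume Q.set)⁻¹ * ∫⁻ y in Q.set, (‖f y‖₊ : ℝ≥0∞) ^ q) ^ (1 / q)

/-!
Take `f = 1_{Q₀}` with `Q₀ = [-1, 1]ⁿ` and `𝒮(Q) = {3ᵏQ : k ≥ 1}`: the annuli `3ᵏ⁺¹Q ∖ 3ᵏQ` are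
disjoint and fill a fraction `1 - 3⁻ⁿ ≥ 2/3` of `3ᵏ⁺¹Q`, so the family is `1/2`-sparse.
If `Q` is centred in `[-1/2, 1/2]ⁿ` and `3ᴺ⁺¹Q ⊆ Q₀`, then for `1 ≤ k ≤ N` the annulus
`3ᵏ⁺¹Q ∖ 3ᵏQ` lies in `Q₀ ∖ 3Q`, where `f 1_{(3Q)ᶜ} = 1`; hence
`⟨f 1_{(3Q)ᶜ}⟩_{r,3ᵏ⁺¹Q} ≥ (2/3)^{1/r}` and `Λ_{𝒮(Q),r}(f 1_{(3Q)ᶜ}) ≥ N (2/3)^{1/r}` on `Q`.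
Such cubes exist for every `N`.
-/

lemma le_essSup_restrict_of_forall_le {α β : Type*} [MeasurableSpace α] [CompleteLattice β]
    {μ : Measure α} {s : Set α} (hs : MeasurableSet s) (hμs : μ s ≠ 0) {F : α → β} {c : β}
    (h : ∀ y ∈ s, c ≤ F y) : c ≤ essSup F (μ.restrict s) := by
  rw [← essSup_const c (mt Measure.restrict_eq_zero.mp hμs)]
  exact essSup_mono_ae ((ae_restrict_iff' hs).mpr (.of_forall h))

lemma ENNReal.eq_top_of_forall_natCast_mul_le {a c : ℝ≥0∞} (hc : c ≠ 0)
    (h : ∀ N : ℕ, (N : ℝ≥0∞) * c ≤ a) : a = ⊤ := by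
  refine top_unique ?_
  rw [← ENNReal.top_mul hc, ← ENNReal.iSup_natCast, ENNReal.iSup_mul]
  exact iSup_le h

namespace Cube
variable {n : ℕ}

lemma set_eq_pi (Q : Cube n) :
    Q.set = univ.pi fun i => Icc (Q.c i - Q.r) (Q.c i + Q.r) := by
  ext x
  simp only [Cube.set, mem_ofPred_eq, mem_univ_pi, mem_Icc, abs_le, sub_le_iff_le_add,
    le_sub_iff_add_le, neg_add_le_iff_le_add]
  refine forall_congr' fun i => ?_
  constructor <;> rintro ⟨h1, h2⟩ <;> constructor <;> linarith

lemma measurableSet_set (Q : Cube n) : MeasurableSet Q.set := by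
  rw [set_eq_pi]; exact .univ_pi fun _ => measurableSet_Icc

lemma isCompact_set (Q : Cube n) : IsCompact Q.set := by
  rw [set_eq_pi]; exact isCompact_univ_pi fun _ => isCompact_Icc

lemma mem_set_center (Q : Cube n) : Q.c ∈ Q.set := fun i => by simp [Q.hr.le]

lemma set_subset_set {Q Q' : Cube n} (h : ∀ i, |Q.c i - Q'.c i| + Q.r ≤ Q'.r) :
    Q.set ⊆ Q'.set := fun y hy i =>
  calc |y i - Q'.c i| = |(y i - Q.c i) + (Q.c i - Q'.c i)| := by ring_nf
    _ ≤ |y i - Q.c i| + |Q.c i - Q'.c i| := abs_add_le _ _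
    _ ≤ Q'.r := by linarith [hy i, h i]

lemma set_subset_of_center_mem {Q P P' : Cube n} (hQP : Q.c ∈ P.set) (hc : P.c = P'.c)
    (hr : P.r + Q.r ≤ P'.r) : Q.set ⊆ P'.set :=
  set_subset_set fun i => by linarith [hc ▸ hQP i]

lemma volume_set (Q : Cube n) : volume Q.set = ENNReal.ofReal ((2 * Q.r) ^ n) := by
  rw [set_eq_pi, volume_pi_pi]
  simp only [Real.volume_Icc, add_sub_sub_cancel, ← two_mul, Finset.prod_const,
    Finset.card_univ, Fintype.card_fin]
  rw [ENNReal.ofReal_pow (by linarith [Q.hr])]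

lemma volume_set_ne_zero (Q : Cube n) : volume Q.set ≠ 0 := by
  simp [volume_set, Q.hr]

lemma volume_real_set (Q : Cube n) : volume.real Q.set = (2 * Q.r) ^ n := by
  rw [measureReal_def, volume_set, ENNReal.toReal_ofReal (by have := Q.hr; positivity)]

lemma volume_real_set_pos (Q : Cube n) : 0 < volume.real Q.set := by
  rw [volume_real_set]; have := Q.hr; positivity

lemma le_avgE_of_one_le_abs {q : ℝ} (hq : 0 < q) {Q : Cube n}
    {g : (Fin n → ℝ) → ℝ} {D : Set (Fin n → ℝ)} {c : ℝ≥0∞} (hD : MeasurableSet D)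
    (hDQ : D ⊆ Q.set) (hg : ∀ y ∈ D, 1 ≤ |g y|) (hc : c * volume Q.set ≤ volume D) :
    c ^ (1 / q) ≤ avgE q Q g := by
  have hint : volume D ≤ ∫⁻ y in Q.set, (‖g y‖₊ : ℝ≥0∞) ^ q :=
    calc volume D = ∫⁻ _ in D, 1 := (setLIntegral_one D).symm
      _ ≤ ∫⁻ y in D, (‖g y‖₊ : ℝ≥0∞) ^ q := setLIntegral_mono' hD fun y hy =>
          ENNReal.one_le_rpow (by exact_mod_cast (hg y hy : 1 ≤ ‖g y‖)) hq
      _ ≤ ∫⁻ y in Q.set, (‖g y‖₊ : ℝ≥0∞) ^ q := lintegral_mono_set hDQ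
  refine ENNReal.rpow_le_rpow ?_ (by positivity)
  calc c = (volume Q.set)⁻¹ * (c * volume Q.set) := by
        rw [mul_comm c, ← mul_assoc, ENNReal.inv_mul_cancel Q.volume_set_ne_zero
          (Q.isCompact_set.measure_lt_top.ne), one_mul]
    _ ≤ (volume Q.set)⁻¹ * ∫⁻ y in Q.set, (‖g y‖₊ : ℝ≥0∞) ^ q := by gcongr; exact hc.trans hint

def dilate (Q : Cube n) (k : ℕ) : Cube n := ⟨Q.c, 3 ^ k * Q.r, by have := Q.hr; positivity⟩

lemma set_dilate_one (Q : Cube n) : (Q.dilate 1).set = Q.three.set := by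
  simp [dilate, three, Cube.set]

lemma monotone_set_dilate (Q : Cube n) : Monotone fun k => (Q.dilate k).set :=
  fun k l hkl => set_subset_set fun i => by
    simp only [dilate, sub_self, abs_zero, zero_add]
    gcongr
    · exact Q.hr.le
    · norm_num

lemma set_subset_set_dilate (Q : Cube n) (k : ℕ) : Q.set ⊆ (Q.dilate k).set := by
  simpa [dilate] using Q.monotone_set_dilate (Nat.zero_le k)

lemma volume_real_set_dilate_succ (Q : Cube n) (k : ℕ) :
    volume.real (Q.dilate (k + 1)).set = 3 ^ n * volume.real (Q.dilate k).set := by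
  simp only [volume_real_set, dilate, pow_succ, ← mul_pow]
  ring_nf

def annulus (Q : Cube n) (k : ℕ) : Set (Fin n → ℝ) := (Q.dilate (k + 1)).set \ (Q.dilate k).set

lemma pairwise_disjoint_annulus (Q : Cube n) : Pairwise (Function.onFun Disjoint Q.annulus) := by
  have h := (disjoint_disjointed fun k => (Q.dilate k).set).comp_of_injective Nat.succ_injective
  convert h using 2
  funext k
  exact (Q.monotone_set_dilate.disjointed_succ (not_isMax k)).symm

lemma two_thirds_mul_le_volume_real_annulus (hn : 0 < n) (Q : Cube n) (k : ℕ) :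
    2 / 3 * volume.real (Q.dilate (k + 1)).set ≤ volume.real (Q.annulus k) := by
  have h3 : (3 : ℝ) ≤ 3 ^ n := le_self_pow₀ (by norm_num) hn.ne'
  have hV := (Q.dilate k).volume_real_set_pos
  rw [annulus, measureReal_sdiff (Q.monotone_set_dilate k.le_succ) (measurableSet_set _)
    (isCompact_set _).measure_lt_top.ne, volume_real_set_dilate_succ]
  nlinarith

lemma measurableSet_annulus (Q : Cube n) (k : ℕ) : MeasurableSet (Q.annulus k) :=
  (measurableSet_set _).diff (measurableSet_set _)

lemma two_thirds_mul_le_volume_annulus (hn : 0 < n) (Q : Cube n) (k : ℕ) :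
    2 / 3 * volume (Q.dilate (k + 1)).set ≤ volume (Q.annulus k) := by
  have hfin : volume (Q.annulus k) ≠ ⊤ :=
    ((measure_mono sdiff_subset).trans_lt (isCompact_set _).measure_lt_top).ne
  rw [← ofReal_measureReal (isCompact_set _).measure_lt_top.ne, ← ofReal_measureReal hfin,
    ← ENNReal.ofReal_ofNat 2, ← ENNReal.ofReal_ofNat 3,
    ← ENNReal.ofReal_div_of_pos three_pos, ← ENNReal.ofReal_mul (by norm_num)]
  exact ENNReal.ofReal_le_ofReal (two_thirds_mul_le_volume_real_annulus hn Q k)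

lemma two_thirds_rpow_le_avgE_dilate (hn : 0 < n) {q : ℝ} (hq : 0 < q) (Q : Cube n) {k : ℕ}
    (hk : 1 ≤ k) {A : Set (Fin n → ℝ)} (hA : (Q.dilate (k + 1)).set ⊆ A) :
    (2 / 3 : ℝ≥0∞) ^ (1 / q) ≤
      avgE q (Q.dilate (k + 1)) (Q.three.setᶜ.indicator (A.indicator 1)) := by
  refine le_avgE_of_one_le_abs hq (Q.measurableSet_annulus k) sdiff_subset (fun y hy => ?_)
    (two_thirds_mul_le_volume_annulus hn Q k)
  have hy3 : y ∈ Q.three.setᶜ := fun h =>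
    hy.2 (Q.monotone_set_dilate hk (by rwa [set_dilate_one] : y ∈ (Q.dilate 1).set))
  simp [indicator_of_mem hy3, indicator_of_mem (hA hy.1)]

lemma natCast_mul_le_tsum_avgE_dilate (hn : 0 < n) {q : ℝ} (hq : 0 < q) (Q : Cube n) {N : ℕ}
    {A : Set (Fin n → ℝ)} (hA : (Q.dilate (N + 1)).set ⊆ A) {y : Fin n → ℝ} (hy : y ∈ Q.set) :
    (N : ℝ≥0∞) * (2 / 3) ^ (1 / q) ≤ ∑' k, avgE q (Q.dilate (k + 1))
      (Q.three.setᶜ.indicator (A.indicator 1)) * (Q.dilate (k + 1)).set.indicator 1 y :=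
  calc (N : ℝ≥0∞) * (2 / 3) ^ (1 / q) = ∑ _k ∈ Finset.Icc 1 N, (2 / 3 : ℝ≥0∞) ^ (1 / q) := by
        simp
    _ ≤ ∑ k ∈ Finset.Icc 1 N, avgE q (Q.dilate (k + 1))
          (Q.three.setᶜ.indicator (A.indicator 1)) * (Q.dilate (k + 1)).set.indicator 1 y := by
        refine Finset.sum_le_sum fun k hk => ?_
        rw [Finset.mem_Icc] at hk
        rw [indicator_of_mem (Q.set_subset_set_dilate _ hy), Pi.one_apply, mul_one]
        exact two_thirds_rpow_le_avgE_dilate hn hq Q hk.1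
          ((Q.monotone_set_dilate (by omega)).trans hA)
    _ ≤ _ := ENNReal.sum_le_tsum _

end Cube

/-- Failure of weak-type bounds for the grand maximal truncation of sparse operators:
for any `1 ≤ r < ∞` there exist `f ∈ L^∞_c`, a set `K` of positive measure, and for every
cube `Q` a sparse family `𝒮(Q)` (uniformly `η`-sparse), such that
`sup_{Q ∋ x} ‖Λ_{𝒮(Q),r}(f 1_{(3Q)ᶜ})‖_{L^∞(Q)} = ∞` for every `x ∈ K`. -/
theorem stmt16 (n : ℕ) (hn : 0 < n) (r : ℝ) (hr : 1 ≤ r) :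
    ∃ f : (Fin n → ℝ) → ℝ, (∃ M, ∀ x, |f x| ≤ M) ∧ HasCompactSupport f ∧
      ∃ K : Set (Fin n → ℝ), 0 < volume K ∧
        ∃ S : Cube n → ℕ → Cube n,
          (∃ η ∈ Set.Ioo (0 : ℝ) 1, ∀ Q : Cube n,
            ∃ E : ℕ → Set (Fin n → ℝ),
              (∀ k, E k ⊆ (S Q k).set ∧
                η * (volume (S Q k).set).toReal < (volume (E k)).toReal) ∧
              Pairwise (Function.onFun Disjoint E)) ∧
          ∀ x ∈ K,
            (⨆ (Q : Cube n) (_ : x ∈ Q.set),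
              essSup
                (fun y => ∑' k, avgE r (S Q k) ((Q.three.set)ᶜ.indicator f)
                    * (S Q k).set.indicator 1 y)
                (volume.restrict Q.set)) = ⊤ := by
  have hr₀ : 0 < r := by linarith
  let Q₀ : Cube n := ⟨0, 1, one_pos⟩
  let K : Cube n := ⟨0, 1 / 2, one_half_pos⟩
  refine ⟨Q₀.set.indicator 1, ⟨1, fun x => ?_⟩,
    HasCompactSupport.intro Q₀.isCompact_set fun x hx => indicator_of_notMem hx _,
    K.set, pos_iff_ne_zero.mpr K.volume_set_ne_zero, fun Q k => Q.dilate (k + 1),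
    ⟨1 / 2, ⟨one_half_pos, one_half_lt_one⟩, fun Q => ⟨Q.annulus, fun k => ⟨sdiff_subset, ?_⟩,
      Q.pairwise_disjoint_annulus⟩⟩, fun x hx => ?_⟩
  · by_cases h : x ∈ Q₀.set <;> simp [h]
  · have hV := (Q.dilate (k + 1)).volume_real_set_pos
    have := Cube.two_thirds_mul_le_volume_real_annulus hn Q k
    simp only [measureReal_def] at hV this
    linarith
  refine ENNReal.eq_top_of_forall_natCast_mul_le (c := (2 / 3) ^ (1 / r))
    (ENNReal.rpow_pos (by norm_num) (by finiteness)).ne' fun N => ?_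
  let Q : Cube n := ⟨x, (2 * 3 ^ (N + 1))⁻¹, by positivity⟩
  have hQ : (Q.dilate (N + 1)).set ⊆ Q₀.set :=
    Cube.set_subset_of_center_mem hx rfl (by simp [Q, Cube.dilate, K, Q₀]; norm_num)
  refine le_iSup₂_of_le Q Q.mem_set_center ?_
  exact le_essSup_restrict_of_forall_le Q.measurableSet_set Q.volume_set_ne_zero
    fun y hy => Q.natCast_mul_le_tsum_avgE_dilate hn hr₀ hQ hy
end
end
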